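/- arXiv:2605.02988 — 2 statements merged into one kernel-verified Lean document; each statement's English description precedes it below -/
import Mathlib

section
/- There exists a unique continuous function G : [0,1] → ℂ satisfying G(x) = αG(2x) - 1/2 for 0 ≤ x < 1/2 and G(x) = (1-α)G(2x-1) + 1/2 for 1/2 ≤ x ≤ 1, where α = (1-i)/2. -/
open Complex

noncomputable def α : ℂ := (1 - I) / 2

noncomputable section DeRhamAux

abbrev I01 := Set.Icc (0:ℝ) 1

def pz : ℂ := (-1 + I) / 2
def po : ℂ := (1 + I) / 2

lemma h01 : (0:ℝ) ≤ 1 := zero_le_one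

def z1 : I01 := ⟨0, by norm_num⟩
def o1 : I01 := ⟨1, by norm_num⟩

lemma fix0 : α * pz - 1/2 = pz := by
  simp only [α, pz]; field_simp; ring_nf; rw [I_sq]; ring
lemma fix1 : (1 - α) * po + 1/2 = po := by
  simp only [α, po]; field_simp; ring_nf; rw [I_sq]; ring
lemma match1 : α * po - 1/2 = 0 := by
  simp only [α, po]; field_simp; ring_nf; rw [I_sq]; ring
lemma match0 : (1 - α) * pz + 1/2 = 0 := by
  simp only [α, pz]; field_simp; ring_nf; rw [I_sq]; ring

lemma norm_one_sub_α : ‖(1:ℂ) - α‖ = ‖α‖ := by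
  have h : (1:ℂ) - α = (1 + I)/2 := by rw [α]; ring
  rw [h, α]
  simp [map_div₀, Complex.norm_def, Complex.normSq_apply]

lemma norm_α_lt_one : ‖α‖ < 1 := by
  have : ‖α‖ ^ 2 = 1/2 := by
    rw [Complex.sq_norm, α]; simp [Complex.normSq_apply]; norm_num
  nlinarith [norm_nonneg α]

def S : Set C(I01, ℂ) := {f | f z1 = pz ∧ f o1 = po}

lemma isClosed_S : IsClosed S := by
  have : S = {f : C(I01, ℂ) | f z1 = pz} ∩ {f | f o1 = po} := rfl
  rw [this]
  exact (isClosed_eq (continuous_eval_const z1) continuous_const).inter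
    (isClosed_eq (continuous_eval_const o1) continuous_const)

instance : CompleteSpace S := isClosed_S.completeSpace_coe

def Tmap (f : C(I01,ℂ)) (hm : α * f o1 - 1/2 = (1-α) * f z1 + 1/2) : C(I01,ℂ) where
  toFun x := if (x:ℝ) ≤ 1/2 then α * f (Set.projIcc 0 1 h01 (2*(x:ℝ))) - 1/2
             else (1-α) * f (Set.projIcc 0 1 h01 (2*(x:ℝ)-1)) + 1/2
  continuous_toFun := by
    apply Continuous.if_le
    · exact (continuous_const.mul (f.continuous.comp (continuous_projIcc.comp
        (continuous_const.mul continuous_subtype_val)))).sub continuous_const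
    · exact (continuous_const.mul (f.continuous.comp (continuous_projIcc.comp
        ((continuous_const.mul continuous_subtype_val).sub continuous_const)))).add continuous_const
    · exact continuous_subtype_val
    · exact continuous_const
    · intro x hx
      have h2 : 2*(x:ℝ) = 1 := by rw [hx]; norm_num
      have h3 : 2*(x:ℝ) - 1 = 0 := by rw [hx]; norm_num
      rw [h2]
      rw [show (1:ℝ) - 1 = 0 from by norm_num]
      have e1 : Set.projIcc (0:ℝ) 1 h01 1 = o1 := by
        rw [Set.projIcc_of_mem h01 (by norm_num : (1:ℝ) ∈ Set.Icc (0:ℝ) 1)]; rfl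
      have e0 : Set.projIcc (0:ℝ) 1 h01 0 = z1 := by
        rw [Set.projIcc_of_mem h01 (by norm_num : (0:ℝ) ∈ Set.Icc (0:ℝ) 1)]; rfl
      rw [e1, e0]; exact hm

lemma S_match (f : S) : α * f.1 o1 - 1/2 = (1-α) * f.1 z1 + 1/2 := by
  rw [f.2.1, f.2.2, match1, match0]

def T : S → S := fun f =>
  ⟨Tmap f.1 (S_match f), by
    constructor
    · show (if ((z1:ℝ)) ≤ 1/2 then α * f.1 (Set.projIcc 0 1 h01 (2*(z1:ℝ))) - 1/2
        else (1-α) * f.1 (Set.projIcc 0 1 h01 (2*(z1:ℝ)-1)) + 1/2) = pz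
      have hz : (z1:ℝ) = 0 := rfl
      rw [hz]
      rw [if_pos (by norm_num)]
      have : (2*(0:ℝ)) = 0 := by norm_num
      rw [this, Set.projIcc_of_mem h01 (by norm_num : (0:ℝ) ∈ Set.Icc (0:ℝ) 1)]
      have : (⟨0, by norm_num⟩ : I01) = z1 := rfl
      rw [this, f.2.1, fix0]
    · show (if ((o1:ℝ)) ≤ 1/2 then α * f.1 (Set.projIcc 0 1 h01 (2*(o1:ℝ))) - 1/2
        else (1-α) * f.1 (Set.projIcc 0 1 h01 (2*(o1:ℝ)-1)) + 1/2) = po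
      have ho : (o1:ℝ) = 1 := rfl
      rw [ho]
      rw [if_neg (by norm_num)]
      have : (2*(1:ℝ) - 1) = 1 := by norm_num
      rw [this, Set.projIcc_of_mem h01 (by norm_num : (1:ℝ) ∈ Set.Icc (0:ℝ) 1)]
      have : (⟨1, by norm_num⟩ : I01) = o1 := rfl
      rw [this, f.2.2, fix1]⟩

instance : Nonempty S :=
  ⟨⟨⟨fun x => pz + ((x:ℝ):ℂ) * (po - pz),
      continuous_const.add ((Complex.continuous_ofReal.comp continuous_subtype_val).mul continuous_const)⟩,
    by show pz + ((z1:ℝ):ℂ) * (po - pz) = pz; norm_num [z1],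
    by show pz + ((o1:ℝ):ℂ) * (po - pz) = po; norm_num [o1]⟩⟩

lemma contractingT : ContractingWith ‖α‖₊ T := by
  constructor
  · rw [← NNReal.coe_lt_coe]; exact norm_α_lt_one
  · rw [lipschitzWith_iff_dist_le_mul]
    intro f g
    rw [Subtype.dist_eq, Subtype.dist_eq, coe_nnnorm]
    have hd : (0:ℝ) ≤ ‖α‖ * dist (f:C(I01,ℂ)) (g:C(I01,ℂ)) := by positivity
    rw [ContinuousMap.dist_le hd]
    intro x
    show dist ((Tmap f.1 (S_match f)) x) ((Tmap g.1 (S_match g)) x) ≤ _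
    simp only [Tmap, ContinuousMap.coe_mk]
    split_ifs with h
    · set u := Set.projIcc (0:ℝ) 1 h01 (2*(x:ℝ))
      have : (α * f.1 u - 1/2) - (α * g.1 u - 1/2) = α * (f.1 u - g.1 u) := by ring
      rw [dist_eq_norm, this, norm_mul, ← dist_eq_norm]
      exact mul_le_mul_of_nonneg_left (ContinuousMap.dist_apply_le_dist u) (norm_nonneg α)
    · set u := Set.projIcc (0:ℝ) 1 h01 (2*(x:ℝ)-1)
      have : ((1-α) * f.1 u + 1/2) - ((1-α) * g.1 u + 1/2) = (1-α) * (f.1 u - g.1 u) := by ring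
      rw [dist_eq_norm, this, norm_mul, norm_one_sub_α, ← dist_eq_norm]
      exact mul_le_mul_of_nonneg_left (ContinuousMap.dist_apply_le_dist u) (norm_nonneg α)

end DeRhamAux

theorem exists_unique_G :
    ∃! G : Set.Icc (0 : ℝ) 1 → ℂ, Continuous G ∧
      (∀ x : ℝ, (hx0 : 0 ≤ x) → (hx : x < 1 / 2) →
        G ⟨x, by constructor <;> linarith⟩ =
          α * G ⟨2 * x, by constructor <;> linarith⟩ - 1 / 2) ∧
      (∀ x : ℝ, (hx0 : 1 / 2 ≤ x) → (hx : x ≤ 1) →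
        G ⟨x, by constructor <;> linarith⟩ =
          (1 - α) * G ⟨2 * x - 1, by constructor <;> linarith⟩ + 1 / 2) := by
  set Gfix := ContractingWith.fixedPoint T contractingT with hGdef
  have hfix : T Gfix = Gfix := ContractingWith.fixedPoint_isFixedPt contractingT
  have happly : ∀ x : I01, (Gfix : C(I01,ℂ)) x =
      (if ((x:ℝ)) ≤ 1/2 then α * (Gfix : C(I01,ℂ)) (Set.projIcc 0 1 h01 (2*(x:ℝ))) - 1/2
        else (1-α) * (Gfix : C(I01,ℂ)) (Set.projIcc 0 1 h01 (2*(x:ℝ)-1)) + 1/2) := by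
    intro x
    conv_lhs => rw [← hfix]
    rfl
  refine ⟨⇑(Gfix : C(I01,ℂ)), ⟨(Gfix : C(I01,ℂ)).continuous, ?_, ?_⟩, ?_⟩
  · intro x hx0 hx
    have := happly ⟨x, by constructor <;> linarith⟩
    rw [if_pos (by simpa using hx.le)] at this
    rw [this]
    congr 2
    rw [Set.projIcc_of_mem h01 (by constructor <;> [linarith; linarith] : (2*x) ∈ Set.Icc (0:ℝ) 1)]
  · intro x hx0 hx
    rcases eq_or_lt_of_le hx0 with heq | hlt
    · -- x = 1/2
      have hx12 : x = 1/2 := heq.symm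
      subst hx12
      have h1 := happly ⟨1/2, by norm_num⟩
      rw [if_pos (by norm_num)] at h1
      have e1 : Set.projIcc (0:ℝ) 1 h01 (2 * ((⟨1/2, by norm_num⟩ : I01):ℝ)) = o1 := by
        apply Subtype.ext
        norm_num [Set.projIcc, o1]
      rw [e1, Gfix.2.2] at h1
      have e2 : (⟨2 * (1/2) - 1, by norm_num⟩ : I01) = z1 := by
        apply Subtype.ext; norm_num; rfl
      rw [h1, e2, Gfix.2.1, match1, match0]
    · have := happly ⟨x, by constructor <;> linarith⟩
      rw [if_neg (by simpa using hlt.not_ge)] at this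
      rw [this]
      congr 2
      rw [Set.projIcc_of_mem h01 (by constructor <;> [linarith; linarith] : (2*x-1) ∈ Set.Icc (0:ℝ) 1)]
  · rintro H ⟨Hcont, Heq1, Heq2⟩
    set Hc : C(I01, ℂ) := ⟨H, Hcont⟩ with hHc
    have hne : (1:ℂ) - α ≠ 0 := by
      rw [α]; intro h
      have := congrArg Complex.im h
      simp at this
    have hαne : α ≠ 0 := by
      rw [α]; intro h
      have := congrArg Complex.im h
      simp at this
    have hH0 : Hc z1 = pz := by
      have h := Heq1 0 le_rfl (by norm_num)
      have e : (⟨2 * 0, by norm_num⟩ : I01) = z1 := by apply Subtype.ext; norm_num; rfl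
      rw [e] at h
      have h0 : H z1 = α * H z1 - 1/2 := h
      have : (1 - α) * H z1 = (1 - α) * pz := by
        rw [show (1-α) * pz = -(1/2) from by linear_combination match0]
        linear_combination h0
      exact mul_left_cancel₀ hne this
    have hH1 : Hc o1 = po := by
      have h := Heq2 1 (by norm_num) le_rfl
      have e : (⟨2 * 1 - 1, by norm_num⟩ : I01) = o1 := by apply Subtype.ext; norm_num; rfl
      rw [e] at h
      have h0 : H o1 = (1-α) * H o1 + 1/2 := h
      have : α * H o1 = α * po := by
        rw [show α * po = 1/2 from by linear_combination match1]
        linear_combination h0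
      exact mul_left_cancel₀ hαne this
    set Hs : S := ⟨Hc, hH0, hH1⟩ with hHs
    have hfixH : T Hs = Hs := by
      apply Subtype.ext
      apply ContinuousMap.ext
      intro x
      show (if ((x:ℝ)) ≤ 1/2 then α * Hc (Set.projIcc 0 1 h01 (2*(x:ℝ))) - 1/2
        else (1-α) * Hc (Set.projIcc 0 1 h01 (2*(x:ℝ)-1)) + 1/2) = Hc x
      obtain ⟨xv, hx0, hx1⟩ := x
      split_ifs with h
      · rcases lt_or_eq_of_le (h : xv ≤ 1/2) with hlt | heq
        · rw [Set.projIcc_of_mem h01 (by constructor <;> [linarith; linarith] : (2*xv) ∈ Set.Icc (0:ℝ) 1)]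
          exact (Heq1 xv hx0 hlt).symm
        · subst heq
          rw [show (2*((1:ℝ)/2)) = 1 from by norm_num,
            Set.projIcc_of_mem h01 (by norm_num : (1:ℝ) ∈ Set.Icc (0:ℝ) 1)]
          have h2 := Heq2 (1/2) le_rfl (by norm_num)
          have e2 : (⟨2 * (1/2) - 1, by norm_num⟩ : I01) = z1 := by apply Subtype.ext; norm_num; rfl
          rw [e2] at h2
          have : Hc (⟨1, by norm_num⟩ : I01) = po := hH1
          rw [this, match1]
          rw [show Hc ⟨1/2, by norm_num⟩ = (1-α) * Hc z1 + 1/2 from h2, hH0, match0]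
      · push_neg at h
        rw [Set.projIcc_of_mem h01 (by constructor <;> [linarith; linarith] : (2*xv-1) ∈ Set.Icc (0:ℝ) 1)]
        exact (Heq2 xv h.le hx1).symm
    have : Hs = Gfix := ContractingWith.fixedPoint_unique contractingT hfixH
    have hfun : Hc = (Gfix : C(I01,ℂ)) := congrArg Subtype.val this
    funext y
    show Hc y = (Gfix : C(I01,ℂ)) y
    rw [hfun]
end

section
/- Define F(x) for terminating binary sequences: if x has binary expansion x = (0.ω₁⋯ω_{k-1}1)₂ (so ω_k = 1, ωₙ = 0 for n > k), set F(x) = (1/2)∑ₙ₌₁^{k-1} (-1)^(1-ωₙ) α^(n-1-q(n-1)) (1-α)^(q(n-1)) with α = (1-i)/2 and q(n) = ω₁+⋯+ωₙ. Then for x ∈ [0, 1/2) dyadic, F(x) = αF(2x) - 1/2. -/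
open Complex

def q (ω : ℕ → ℕ) (n : ℕ) : ℕ := ∑ k ∈ Finset.Icc 1 n, ω k

/-- `F ω k` is the value associated to the dyadic point with binary expansion
`(0.ω₁⋯ω_{k-1}1)₂`. -/
noncomputable def F (ω : ℕ → ℕ) (k : ℕ) : ℂ :=
  (1 / 2 : ℂ) * ∑ n ∈ Finset.Ico 1 k,
    (-1 : ℂ) ^ (1 - ω n) * α ^ (n - 1 - q ω (n - 1)) * (1 - α) ^ (q ω (n - 1))

lemma q_succ (ω : ℕ → ℕ) (n : ℕ) : q ω (n + 1) = q ω n + ω (n + 1) := by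
  rw [q, Finset.sum_Icc_succ_top (by omega : 1 ≤ n + 1), ← q]

lemma q_shift (ω : ℕ → ℕ) (hω1 : ω 1 = 0) (m : ℕ) :
    q (fun n => ω (n + 1)) m = q ω (m + 1) := by
  induction m with
  | zero => simp [q, hω1]
  | succ m ih => rw [q_succ, ih, q_succ ω (m + 1)]

lemma q_le (ω : ℕ → ℕ) (hω : ∀ n, ω n ≤ 1) (hω1 : ω 1 = 0) (n : ℕ) :
    q ω (n + 1) ≤ n := by
  induction n with
  | zero => simp [q, hω1]
  | succ n ih =>
      rw [q_succ]
      have := hω (n + 1 + 1)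
      omega

theorem F_left_half (ω : ℕ → ℕ) (hω : ∀ n, ω n ≤ 1) (k : ℕ) (hk : 2 ≤ k)
    (hω1 : ω 1 = 0) (hωk : ω k = 1) :
    F ω k = α * F (fun n => ω (n + 1)) (k - 1) - 1 / 2 := by
  have h0 : q ω 0 = 0 := by simp [q]
  rw [F, F, Finset.sum_eq_sum_Ico_succ_bot (by omega : 1 < k),
    Finset.sum_Ico_eq_sum_range, Finset.sum_Ico_eq_sum_range,
    (by omega : k - 1 - 1 = k - (1 + 1))]
  have hsum : ∀ i ∈ Finset.range (k - (1 + 1)),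
      (-1 : ℂ) ^ (1 - ω (1 + 1 + i)) * α ^ (1 + 1 + i - 1 - q ω (1 + 1 + i - 1)) *
        (1 - α) ^ (q ω (1 + 1 + i - 1)) =
      α * ((-1 : ℂ) ^ (1 - ω (1 + i + 1)) *
        α ^ (1 + i - 1 - q (fun n => ω (n + 1)) (1 + i - 1)) *
        (1 - α) ^ (q (fun n => ω (n + 1)) (1 + i - 1))) := by
    intro i _
    have h1 : 1 + 1 + i - 1 = i + 1 := by omega
    have h2 : 1 + i - 1 = i := by omega
    rw [h1, h2, q_shift ω hω1]
    have hle := q_le ω hω hω1 i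
    have h3 : i + 1 - q ω (i + 1) = (i - q ω (i + 1)) + 1 := by omega
    have h4 : 1 + 1 + i = 1 + i + 1 := by omega
    rw [h3, h4, pow_succ]
    ring
  rw [Finset.sum_congr rfl hsum, ← Finset.mul_sum]
  simp only [hω1, h0, Nat.sub_self, pow_zero, pow_one, mul_one, one_mul]
  ring
end
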